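/- For all integers N ≥ 1, r ≥ 1 and n ≥ 1, B^{(r)}_{N,n} = n! · ∑_{k=1}^{n} (−1)^k ∑_{e_1+⋯+e_k=n, e_1,…,e_k ≥ 1} M_r(e_1) ⋯ M_r(e_k), where the inner sum is over all compositions of n into k positive parts. -/

import Mathlib

/-- The power series ∑_{i≥0} (N!/(N+i)!) xⁱ over ℚ. -/
noncomputable def hgSeries (N : ℕ) : PowerSeries ℚ :=
  PowerSeries.mk fun i => (N.factorial : ℚ) / ((N + i).factorial : ℚ)

/-- The higher order hypergeometric Bernoulli number `B^{(r)}_{N,n}`, defined so that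
`∑ (B^{(r)}_{N,n}/n!) xⁿ` is the r-th power of the multiplicative inverse of
`hgSeries N` in ℚ[[x]]. -/
noncomputable def hBr (N r n : ℕ) : ℚ :=
  (n.factorial : ℚ) * PowerSeries.coeff n ((hgSeries N)⁻¹ ^ r)

/-- `M_r(e) = ∑_{i₁+⋯+i_r=e} (N!)^r / ((N+i₁)! ⋯ (N+i_r)!)`. -/
noncomputable def M (N r e : ℕ) : ℚ :=
  ∑ i ∈ Finset.Nat.antidiagonalTuple r e,
    (N.factorial : ℚ) ^ r / ∏ j, ((N + i j).factorial : ℚ)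

/-! Write `G = (hgSeries N) ^ r = 1 + H` with `H(0) = 0`. Modulo `X ^ (n + 1)` the inverse of `G` is
the truncated geometric series `∑_{k ≤ n} (-H) ^ k`; the coefficients of `G` are the `M_r(e)`, and the
`n`-th coefficient of `H ^ k` is the sum over compositions of `n` into `k` positive parts because
`H` has no constant term. -/

open Finset

namespace PowerSeries

section CommSemiring

variable {R : Type*} [CommSemiring R]

theorem coeff_pow_eq_sum_antidiagonalTuple (k n : ℕ) (φ : R⟦X⟧) :
    coeff n (φ ^ k) = ∑ l ∈ Nat.antidiagonalTuple k n, ∏ j, coeff (l j) φ := by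
  classical
  rw [← Fin.prod_const, coeff_prod, finsuppAntidiag, sum_map,
    ← piAntidiag_univ_fin_eq_antidiagonalTuple, ← sum_attach (piAntidiag univ n)]
  rfl

theorem coeff_pow_eq_sum_compositions {φ : R⟦X⟧} (hφ : constantCoeff φ = 0) (k n : ℕ) :
    coeff n (φ ^ k) =
      ∑ e ∈ (Nat.antidiagonalTuple k n).filter (fun e => ∀ j, 1 ≤ e j), ∏ j, coeff (e j) φ := by
  rw [coeff_pow_eq_sum_antidiagonalTuple, sum_filter_of_ne]
  intro e _ hne j
  by_contra! hj
  refine hne (prod_eq_zero (mem_univ j) ?_)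
  rw [Nat.lt_one_iff.mp hj, coeff_zero_eq_constantCoeff_apply, hφ]

end CommSemiring

theorem coeff_neg_pow {R : Type*} [CommRing R] (φ : R⟦X⟧) (k n : ℕ) :
    coeff n ((-φ) ^ k) = (-1) ^ k * coeff n (φ ^ k) := by
  rw [← neg_one_smul R φ, smul_pow, coeff_smul, smul_eq_mul]

section Field

variable {k : Type*} [Field k]

protected theorem inv_pow (φ : k⟦X⟧) (r : ℕ) : φ⁻¹ ^ r = (φ ^ r)⁻¹ := by
  induction r with
  | zero => rw [pow_zero, pow_zero, inv_one]
  | succ r ih => rw [pow_succ, pow_succ', PowerSeries.mul_inv_rev, ih]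

theorem coeff_inv_eq_sum_coeff_one_sub_pow {F : k⟦X⟧} (hF : constantCoeff F = 1) (n : ℕ) :
    coeff n F⁻¹ = ∑ i ∈ range (n + 1), coeff n ((1 - F) ^ i) := by
  have hunit : constantCoeff F ≠ 0 := by rw [hF]; exact one_ne_zero
  have hgeom := mul_neg_geom_sum (1 - F) (n + 1)
  rw [sub_sub_cancel] at hgeom
  have htail : X ^ (n + 1) ∣ F⁻¹ * (1 - F) ^ (n + 1) := by
    refine Dvd.dvd.mul_left (pow_dvd_pow_of_dvd (X_dvd_iff.mpr ?_) _) _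
    rw [map_sub, map_one, hF, sub_self]
  have hS : ∑ i ∈ range (n + 1), (1 - F) ^ i = F⁻¹ - F⁻¹ * (1 - F) ^ (n + 1) := by
    rw [← mul_one_sub, ← hgeom, ← mul_assoc, PowerSeries.inv_mul_cancel _ hunit, one_mul]
  rw [← map_sum, hS, map_sub, X_pow_dvd_iff.mp htail n (Nat.lt_succ_self n), sub_zero]

end Field

end PowerSeries

open PowerSeries

theorem constantCoeff_hgSeries (N : ℕ) : constantCoeff (hgSeries N) = 1 := by
  rw [← coeff_zero_eq_constantCoeff_apply, hgSeries, coeff_mk,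
    Nat.add_zero, div_self (by exact_mod_cast N.factorial_ne_zero)]

theorem coeff_hgSeries_pow (N r e : ℕ) : coeff e (hgSeries N ^ r) = M N r e := by
  rw [coeff_pow_eq_sum_antidiagonalTuple, M]
  refine sum_congr rfl fun i _ => ?_
  simp only [hgSeries, coeff_mk]
  rw [prod_div_distrib, prod_const, card_univ, Fintype.card_fin]

theorem stmt11_general (N r n : ℕ) (hn : 1 ≤ n) :
    hBr N r n = (n.factorial : ℚ) * ∑ k ∈ Finset.Icc 1 n, (-1 : ℚ) ^ k *
      ∑ e ∈ (Finset.Nat.antidiagonalTuple k n).filter (fun e => ∀ j, 1 ≤ e j),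
        ∏ j, M N r (e j) := by
  have hG : constantCoeff (hgSeries N ^ r) = 1 := by
    rw [map_pow, constantCoeff_hgSeries, one_pow]
  have hG₁ : constantCoeff (hgSeries N ^ r - 1) = 0 := by
    rw [map_sub, hG, map_one, sub_self]
  rw [hBr, PowerSeries.inv_pow, coeff_inv_eq_sum_coeff_one_sub_pow hG, range_eq_Ico,
    sum_eq_sum_Ico_succ_bot n.add_one_pos, pow_zero, coeff_one,
    if_neg (Nat.one_le_iff_ne_zero.mp hn), zero_add, Ico_add_one_right_eq_Icc]
  congr 1
  refine sum_congr rfl fun k _ => ?_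
  rw [← neg_sub, coeff_neg_pow, coeff_pow_eq_sum_compositions hG₁]
  refine congrArg _ (sum_congr rfl fun e he => prod_congr rfl fun j _ => ?_)
  have hej : e j ≠ 0 := Nat.one_le_iff_ne_zero.mp ((mem_filter.mp he).2 j)
  rw [map_sub, coeff_hgSeries_pow, coeff_one, if_neg hej, sub_zero]

theorem stmt11 (N r n : ℕ) (hN : 1 ≤ N) (hr : 1 ≤ r) (hn : 1 ≤ n) :
    hBr N r n = (n.factorial : ℚ) * ∑ k ∈ Finset.Icc 1 n, (-1 : ℚ) ^ k *
      ∑ e ∈ (Finset.Nat.antidiagonalTuple k n).filter (fun e => ∀ j, 1 ≤ e j),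
        ∏ j, M N r (e j) :=
  stmt11_general N r n hn
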